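/- Let α ≥ 2, let a ∈ (0, 1/2], and let M > 0. Then there exists ε > 0 such that for every C¹ injective closed curve γ: ℝ/ℤ → ℝ³ parametrized by arc length (|γ′| ≡ 1, total length 1): if there exist s, t ∈ ℝ/ℤ with d(s,t) ≥ a and |γ(s) − γ(t)| ≤ ε, then E^(α)(γ) ≥ M. (Self-repulsiveness of E^(α) for α ≥ 2: the energy blows up as a knot degenerates to a singular knot with a double point.) -/

import Mathlib

open MeasureTheory

noncomputable section

/-- ℝ³ with the Euclidean norm. -/
abbrev E3 := EuclideanSpace ℝ (Fin 3)

/-- The arc-length distance on ℝ/ℤ, written for parameters `s, t ∈ [0,1]`. -/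
def arcd (s t : ℝ) : ℝ := min |s - t| (1 - |s - t|)

/-!
Suppose `‖γ s - γ t‖ ≤ ε` while `arcd s t ≥ a`. For every scale `w` with `ε ≤ w ≤ a / 8`, the pairs
`(u, v)` with `|u - s|, |v - t| ∈ [w, 2w)` have chord at most `5w` (as `γ` is 1-Lipschitz) and arc
distance at least `a / 2`. Since `α ≥ 2`, the integrand there is at least `1 / (5w)² - (2 / a)^α`,
so this square of area `w²` contributes at least `1/25 - w² (2 / a)^α`, a fixed positive amount
once `w` is small. The dyadic scales `w = ε 2^k` give about `log₂ (1 / ε)` disjoint such squares.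
-/

open Set Function

lemma arcd_le_half (s t : ℝ) : arcd s t ≤ 1 / 2 := by
  rcases le_total |s - t| (1 / 2) with h | h
  · exact (min_le_left _ _).trans h
  · exact (min_le_right _ _).trans (by linarith)

lemma arcd_le_arcd_add (s t u v : ℝ) : arcd s t ≤ arcd u v + |u - s| + |v - t| := by
  have hdiff : |(s - t) - (u - v)| ≤ |u - s| + |v - t| :=
    calc |(s - t) - (u - v)| = |(v - t) - (u - s)| := by ring_nf
      _ ≤ |v - t| + |u - s| := abs_sub _ _
      _ = |u - s| + |v - t| := add_comm _ _
  obtain ⟨h₁, h₂⟩ := abs_le.1 ((abs_abs_sub_abs_le_abs_sub (s - t) (u - v)).trans hdiff)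
  unfold arcd
  rw [← min_add_add_right, ← min_add_add_right]
  exact min_le_min (by linarith) (by linarith)

lemma arcd_eq_zero_of_sub_eq_intCast {u v : ℝ} (hu : u ∈ Icc (0 : ℝ) 1) (hv : v ∈ Icc (0 : ℝ) 1)
    {n : ℤ} (h : u - v = n) : arcd u v = 0 := by
  have hn₁ : (-1 : ℤ) ≤ n := by exact_mod_cast h ▸ (by linarith [hu.1, hv.2] : (-1 : ℝ) ≤ u - v)
  have hn₂ : n ≤ 1 := by exact_mod_cast h ▸ (by linarith [hu.2, hv.1] : u - v ≤ 1)
  unfold arcd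
  rw [h]
  interval_cases n <;> norm_num

lemma norm_sub_pos_of_arcd_pos {E : Type*} [NormedAddCommGroup E] {γ : ℝ → E}
    (hinj : ∀ s t : ℝ, γ s = γ t → ∃ n : ℤ, s - t = n) {u v : ℝ} (hu : u ∈ Icc (0 : ℝ) 1)
    (hv : v ∈ Icc (0 : ℝ) 1) (h : 0 < arcd u v) : 0 < ‖γ u - γ v‖ := by
  refine norm_pos_iff.2 (sub_ne_zero.2 fun huv => ?_)
  obtain ⟨n, hn⟩ := hinj u v huv
  exact h.ne' (arcd_eq_zero_of_sub_eq_intCast hu hv hn)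

lemma one_div_sq_sub_le_one_div_rpow_sub {α B c D d : ℝ} (hα : 2 ≤ α) (hc : 0 < c) (hcB : c ≤ B)
    (hB : B ≤ 1) (hD : 0 < D) (hDd : D ≤ d) :
    1 / B ^ 2 - 1 / D ^ α ≤ 1 / c ^ α - 1 / d ^ α := by
  have hcα : c ^ α ≤ B ^ 2 :=
    calc c ^ α ≤ c ^ (2 : ℝ) := Real.rpow_le_rpow_of_exponent_ge hc (hcB.trans hB) hα
      _ = c ^ 2 := Real.rpow_natCast c 2
      _ ≤ B ^ 2 := pow_le_pow_left₀ hc.le hcB 2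
  have hdα : D ^ α ≤ d ^ α := Real.rpow_le_rpow hD.le hDd (by linarith)
  have h₁ : 1 / B ^ 2 ≤ 1 / c ^ α := one_div_le_one_div_of_le (by positivity) hcα
  have h₂ : 1 / d ^ α ≤ 1 / D ^ α := one_div_le_one_div_of_le (by positivity) hdα
  linarith

/-- From `s ∈ [0, 1]`, one can move a distance `1 / 2` in the direction `inward s` without
leaving `[0, 1]`; shells around `s` are taken on that side. -/
def inward (s : ℝ) : ℝ := if s ≤ 1 / 2 then 1 else -1

lemma abs_inward (s : ℝ) : |inward s| = 1 := by
  unfold inward; split_ifs <;> simp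

lemma inward_mul_self (s : ℝ) : inward s * inward s = 1 := by
  rw [← abs_mul_abs_self, abs_inward, one_mul]

def inwardShell (s r r' : ℝ) : Set ℝ := (fun u => inward s * (u - s)) ⁻¹' Ico r r'

lemma measurableSet_inwardShell (s r r' : ℝ) : MeasurableSet (inwardShell s r r') :=
  measurableSet_Ico.preimage (by fun_prop)

lemma volume_inwardShell (s r r' : ℝ) : volume (inwardShell s r r') = ENNReal.ofReal (r' - r) := by
  have hshift : inwardShell s r r' = (fun u => u + -s) ⁻¹' ((fun x => inward s * x) ⁻¹' Ico r r') := by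
    ext u; simp [inwardShell, sub_eq_add_neg]
  have hne : inward s ≠ 0 := fun h => by simpa [h] using abs_inward s
  rw [hshift, measure_preimage_add_right, Real.volume_preimage_mul_left hne, Real.volume_Ico,
    abs_inv, abs_inward, inv_one, ENNReal.ofReal_one, one_mul]

lemma abs_sub_mem_of_mem_inwardShell {s r r' u : ℝ} (hr : 0 ≤ r) (hu : u ∈ inwardShell s r r') :
    |u - s| ∈ Ico r r' := by
  have habs : |u - s| = inward s * (u - s) := by
    rw [← one_mul |u - s|, ← abs_inward s, ← abs_mul, abs_of_nonneg (hr.trans hu.1)]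
  exact habs ▸ hu

lemma inwardShell_subset_Icc {s r r' : ℝ} (hs : s ∈ Icc (0 : ℝ) 1) (hr : 0 ≤ r) (hr' : r' ≤ 1 / 2) :
    inwardShell s r r' ⊆ Icc 0 1 := by
  intro u hu
  have hu' : u = s + inward s * (inward s * (u - s)) := by
    rw [← mul_assoc, inward_mul_self]; ring
  have hx : 0 ≤ inward s * (u - s) ∧ inward s * (u - s) ≤ 1 / 2 :=
    ⟨hr.trans hu.1, hu.2.le.trans hr'⟩
  rw [hu']
  unfold inward at hx ⊢
  split_ifs at hx ⊢ <;> constructor <;> linarith [hs.1, hs.2]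

def shellBox (s t r r' : ℝ) : Set (ℝ × ℝ) := inwardShell s r r' ×ˢ inwardShell t r r'

lemma measurableSet_shellBox (s t r r' : ℝ) : MeasurableSet (shellBox s t r r') :=
  (measurableSet_inwardShell s r r').prod (measurableSet_inwardShell t r r')

lemma volume_shellBox (s t r r' : ℝ) :
    volume (shellBox s t r r') = ENNReal.ofReal (r' - r) * ENNReal.ofReal (r' - r) := by
  rw [shellBox, Measure.volume_eq_prod, Measure.prod_prod, volume_inwardShell, volume_inwardShell]

lemma sum_setLIntegral_shellBox_le {s t : ℝ} (hs : s ∈ Icc (0 : ℝ) 1) (ht : t ∈ Icc (0 : ℝ) 1)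
    {r : ℕ → ℝ} (hr : Monotone r) (hr₀ : 0 ≤ r 0) {N : ℕ} (hrN : r N ≤ 1 / 2) (f : ℝ × ℝ → ENNReal) :
    ∑ k ∈ Finset.range N, ∫⁻ p in shellBox s t (r k) (r (k + 1)), f p ≤
      ∫⁻ p in Icc (0 : ℝ) 1 ×ˢ Icc (0 : ℝ) 1, f p := by
  have hdisj : Pairwise (Disjoint on fun k => shellBox s t (r k) (r (k + 1))) := by
    intro k l hkl
    refine disjoint_prod.2 (Or.inl (Disjoint.preimage _ ?_))
    simpa [Order.succ_eq_add_one] using hr.pairwise_disjoint_on_Ico_succ hkl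
  rw [← lintegral_biUnion_finset (hdisj.set_pairwise _)
    (fun k _ => measurableSet_shellBox s t _ _)]
  refine lintegral_mono_set (iUnion₂_subset fun k hk => ?_)
  have hk : r (k + 1) ≤ 1 / 2 := (hr (Finset.mem_range.1 hk)).trans hrN
  exact prod_mono (inwardShell_subset_Icc hs (hr₀.trans (hr k.zero_le)) hk)
    (inwardShell_subset_Icc ht (hr₀.trans (hr k.zero_le)) hk)

def energyDensity {E : Type*} [NormedAddCommGroup E] (α : ℝ) (γ : ℝ → E) (p : ℝ × ℝ) : ENNReal :=
  ENNReal.ofReal (1 / ‖γ p.1 - γ p.2‖ ^ α - 1 / arcd p.1 p.2 ^ α)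

section NearDoublePoint

variable {E : Type*} [NormedAddCommGroup E] {γ : ℝ → E} {α a s t w : ℝ}

lemma le_energyDensity_of_mem_shellBox (hlip : LipschitzWith 1 γ)
    (hinj : ∀ s t : ℝ, γ s = γ t → ∃ n : ℤ, s - t = n) (hα : 2 ≤ α)
    (hs : s ∈ Icc (0 : ℝ) 1) (ht : t ∈ Icc (0 : ℝ) 1) (hst : a ≤ arcd s t)
    (hclose : ‖γ s - γ t‖ ≤ w) (hw : 0 < w) (hwa : 8 * w ≤ a) {p : ℝ × ℝ}
    (hp : p ∈ shellBox s t w (2 * w)) :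
    ENNReal.ofReal (1 / (5 * w) ^ 2 - 1 / (a / 2) ^ α) ≤ energyDensity α γ p := by
  obtain ⟨u, v⟩ := p
  obtain ⟨hu, hv⟩ := hp
  have hus := abs_sub_mem_of_mem_inwardShell hw.le hu
  have hvt := abs_sub_mem_of_mem_inwardShell hw.le hv
  have hu01 := inwardShell_subset_Icc hs hw.le (by linarith [arcd_le_half s t]) hu
  have hv01 := inwardShell_subset_Icc ht hw.le (by linarith [arcd_le_half s t]) hv
  have hchord : ‖γ u - γ v‖ ≤ 5 * w :=
    calc ‖γ u - γ v‖ ≤ ‖γ u - γ s‖ + ‖γ s - γ t‖ + ‖γ t - γ v‖ := by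
          simpa only [dist_eq_norm] using dist_triangle4 (γ u) (γ s) (γ t) (γ v)
      _ ≤ |u - s| + w + |t - v| := by
        gcongr <;> simpa using hlip.norm_sub_le _ _
      _ ≤ 5 * w := by linarith [hus.2, hvt.2, abs_sub_comm t v]
  have harc : a / 2 ≤ arcd u v := by linarith [arcd_le_arcd_add s t u v, hus.2, hvt.2]
  refine ENNReal.ofReal_le_ofReal (one_div_sq_sub_le_one_div_rpow_sub hα ?_ hchord
    (by linarith [arcd_le_half s t]) (by linarith) harc)
  exact norm_sub_pos_of_arcd_pos hinj hu01 hv01 (by linarith)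

lemma le_setLIntegral_energyDensity_shellBox (hlip : LipschitzWith 1 γ)
    (hinj : ∀ s t : ℝ, γ s = γ t → ∃ n : ℤ, s - t = n) (hα : 2 ≤ α)
    (hs : s ∈ Icc (0 : ℝ) 1) (ht : t ∈ Icc (0 : ℝ) 1) (hst : a ≤ arcd s t)
    (hclose : ‖γ s - γ t‖ ≤ w) (hw : 0 < w) (hwa : 8 * w ≤ a) :
    ENNReal.ofReal ((1 / (5 * w) ^ 2 - 1 / (a / 2) ^ α) * (w * w)) ≤
      ∫⁻ p in shellBox s t w (2 * w), energyDensity α γ p :=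
  calc ENNReal.ofReal ((1 / (5 * w) ^ 2 - 1 / (a / 2) ^ α) * (w * w))
      = ∫⁻ _ in shellBox s t w (2 * w), ENNReal.ofReal (1 / (5 * w) ^ 2 - 1 / (a / 2) ^ α) := by
        rw [setLIntegral_const, volume_shellBox, ENNReal.ofReal_mul' (by positivity),
          ENNReal.ofReal_mul hw.le, two_mul, add_sub_cancel_right]
    _ ≤ ∫⁻ p in shellBox s t w (2 * w), energyDensity α γ p :=
        setLIntegral_mono' (measurableSet_shellBox ..) fun _ hp =>
          le_energyDensity_of_mem_shellBox hlip hinj hα hs ht hst hclose hw hwa hp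

end NearDoublePoint

lemma one_div_fifty_le {w K : ℝ} (hw : 0 < w) (hwK : 8 * w ≤ K) (hK : K ≤ 1) :
    1 / 50 ≤ (1 / (5 * w) ^ 2 - 1 / K) * (w * w) := by
  have hK0 : 0 < K := by linarith
  have hww : w * w / K ≤ 1 / 64 := by
    rw [div_le_iff₀ hK0]; nlinarith
  have hexp : (1 / (5 * w) ^ 2 - 1 / K) * (w * w) = 1 / 25 - w * w / K := by
    field_simp; ring
  linarith

theorem Ealpha_self_repulsive_general (α : ℝ) (hα : 2 ≤ α) (a : ℝ)
    (ha : a ∈ Set.Ioc (0:ℝ) (1/2)) (M : ℝ) :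
    ∃ ε > (0:ℝ), ∀ γ : ℝ → E3,
      ContDiff ℝ 1 γ →
      Function.Periodic γ 1 →
      (∀ s t : ℝ, γ s = γ t → ∃ n : ℤ, s - t = n) →
      (∀ s : ℝ, ‖deriv γ s‖ = 1) →
      (∃ s ∈ Set.Icc (0:ℝ) 1, ∃ t ∈ Set.Icc (0:ℝ) 1,
        a ≤ arcd s t ∧ ‖γ s - γ t‖ ≤ ε) →
      ENNReal.ofReal M ≤
        ∫⁻ p in Set.Icc (0:ℝ) 1 ×ˢ Set.Icc (0:ℝ) 1,
          ENNReal.ofReal (1 / ‖γ p.1 - γ p.2‖ ^ α - 1 / arcd p.1 p.2 ^ α) := by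
  obtain ⟨ha₀, ha₁⟩ := ha
  set K := (a / 2) ^ α
  have hKa : K ≤ a / 2 := Real.rpow_le_self_of_le_one (by linarith) (by linarith) (by linarith)
  set N := ⌈50 * M⌉₊
  set r : ℕ → ℝ := fun k => K / 8 / 2 ^ N * 2 ^ k
  have hr : Monotone r := fun k l hkl =>
    mul_le_mul_of_nonneg_left (pow_le_pow_right₀ one_le_two hkl) (by positivity)
  have hrN : r N = K / 8 := by simp only [r]; field_simp
  refine ⟨r 0, by positivity, fun γ hγ _ hinj hspeed ⟨s, hs, t, ht, hst, hclose⟩ => ?_⟩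
  have hlip : LipschitzWith 1 γ :=
    lipschitzWith_of_nnnorm_deriv_le (hγ.differentiable one_ne_zero) fun x => by
      simp [← NNReal.coe_le_coe, hspeed x]
  have hbox : ∀ k ∈ Finset.range N, ENNReal.ofReal (1 / 50) ≤
      ∫⁻ p in shellBox s t (r k) (r (k + 1)), energyDensity α γ p := by
    intro k hk
    have hwK : 8 * r k ≤ K := by linarith [hr (Finset.mem_range.1 hk).le]
    rw [show r (k + 1) = 2 * r k by simp only [r]; ring]
    exact (ENNReal.ofReal_le_ofReal (one_div_fifty_le (by positivity) hwK (by linarith))).trans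
      (le_setLIntegral_energyDensity_shellBox hlip hinj hα hs ht hst (hclose.trans (hr k.zero_le))
        (by positivity) (by linarith))
  calc ENNReal.ofReal M ≤ ∑ _ ∈ Finset.range N, ENNReal.ofReal (1 / 50) := by
        rw [Finset.sum_const, Finset.card_range, nsmul_eq_mul, ← ENNReal.ofReal_natCast,
          ← ENNReal.ofReal_mul (by positivity)]
        exact ENNReal.ofReal_le_ofReal (by linarith [Nat.le_ceil (50 * M)])
    _ ≤ ∑ k ∈ Finset.range N, ∫⁻ p in shellBox s t (r k) (r (k + 1)), energyDensity α γ p :=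
        Finset.sum_le_sum hbox
    _ ≤ _ := sum_setLIntegral_shellBox_le hs ht hr (by positivity) (by linarith) _

/-- Self-repulsiveness of `E^(α)` for `α ≥ 2`: given `α ≥ 2`, `a ∈ (0, 1/2]` and `M > 0`,
there is `ε > 0` such that every unit-speed C¹ knot of length 1 possessing a pair of
points at arc-length distance at least `a` but chord distance at most `ε` has
`E^(α)`-energy at least `M`. -/
theorem Ealpha_self_repulsive (α : ℝ) (hα : 2 ≤ α) (a : ℝ)
    (ha : a ∈ Set.Ioc (0:ℝ) (1/2)) (M : ℝ) (hM : 0 < M) :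
    ∃ ε > (0:ℝ), ∀ γ : ℝ → E3,
      ContDiff ℝ 1 γ →
      Function.Periodic γ 1 →
      (∀ s t : ℝ, γ s = γ t → ∃ n : ℤ, s - t = n) →
      (∀ s : ℝ, ‖deriv γ s‖ = 1) →
      (∃ s ∈ Set.Icc (0:ℝ) 1, ∃ t ∈ Set.Icc (0:ℝ) 1,
        a ≤ arcd s t ∧ ‖γ s - γ t‖ ≤ ε) →
      ENNReal.ofReal M ≤
        ∫⁻ p in Set.Icc (0:ℝ) 1 ×ˢ Set.Icc (0:ℝ) 1,
          ENNReal.ofReal (1 / ‖γ p.1 - γ p.2‖ ^ α - 1 / arcd p.1 p.2 ^ α) :=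
  Ealpha_self_repulsive_general α hα a ha M
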